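/- Let Ω ⊂ ℂ be a bounded domain containing 0, let F: D(0,1) → Ω be a biholomorphism with F(0) = 0, and suppose the Bergman kernel of Ω satisfies K_Ω(z, 0) = 1/v(Ω) for all z ∈ Ω. Then F is linear, i.e., F(z) = F'(0)·z, and hence Ω is the disk D(0, |F'(0)|). -/

import Mathlib

/-!
Since `K(·, 0)` is the constant `1 / v(Ω)`, the reproducing property becomes the mean value
identity `h 0 = v(Ω)⁻¹ ∫_Ω h` on the Bergman space of `Ω`. Applied to `h = G'` and pulled back
along `F` (Jacobian `|F'|²`, and `|F'|² G'∘F = conj F'`), it gives `F'(0)⁻¹ = v(Ω)⁻¹ ∫_D conj F'`,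
and the area mean value property on the disk turns this into `v(Ω) = π |F'(0)|²`. As also
`v(Ω) = ∫_D |F'|²`, the function `F'` has mean `F'(0)` and mean square `|F'(0)|²` on `D`, so its
variance `∫_D |F' - F'(0)|²` vanishes and `F'` is constant.
-/
open MeasureTheory Metric Complex Filter

/-- The Bergman space of square-integrable holomorphic functions on `Ω ⊆ ℂ`. -/
def BergmanSpaceC (Ω : Set ℂ) : Set (ℂ → ℂ) :=
  {f | DifferentiableOn ℂ f Ω ∧ MemLp f 2 (volume.restrict Ω)}

/-- `K` is the Bergman (reproducing) kernel of `Ω ⊆ ℂ`. -/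
def IsBergmanKernelC (Ω : Set ℂ) (K : ℂ → ℂ → ℂ) : Prop :=
  (∀ w ∈ Ω, (fun z => K z w) ∈ BergmanSpaceC Ω) ∧
  (∀ z ∈ Ω, ∀ w ∈ Ω, K z w = (starRingEnd ℂ) (K w z)) ∧
  (∀ f ∈ BergmanSpaceC Ω, ∀ z ∈ Ω, f z = ∫ w in Ω, f w * K z w)

open Set Real Topology ENNReal ComplexConjugate

section PolarCoordinates

variable {E : Type*} [NormedAddCommGroup E]

theorem Complex.polarCoord_symm_eq_circleMap (p : ℝ × ℝ) :
    Complex.polarCoord.symm p = circleMap 0 p.1 p.2 := by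
  simp [circleMap, Complex.exp_mul_I]

theorem Complex.integrableOn_comp_polarCoord_symm_iff [NormedSpace ℝ E] (g : ℂ → E) :
    IntegrableOn (fun p : ℝ × ℝ ↦ p.1 • g (Complex.polarCoord.symm p)) polarCoord.target ↔
      Integrable g := by
  have hjac := integrableOn_image_iff_integrableOn_abs_det_fderiv_smul volume
    polarCoord.open_target.measurableSet
    (fun p _ ↦ (hasFDerivAt_polarCoord_symm p).hasFDerivWithinAt) polarCoord.symm.injOn
    (g ∘ measurableEquivRealProd.symm)
  rw [polarCoord.symm_image_target_eq_source, IntegrableOn,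
    Measure.restrict_congr_set polarCoord_source_ae_eq_univ, Measure.restrict_univ,
    (Complex.volume_preserving_equiv_real_prod.symm).integrable_comp_emb
      measurableEquivRealProd.symm.measurableEmbedding] at hjac
  rw [hjac]
  refine integrableOn_congr_fun (fun p hp ↦ ?_) polarCoord.open_target.measurableSet
  simp only [det_fderivPolarCoordSymm, abs_of_pos (show 0 < p.1 from hp.1), Function.comp_apply,
    measurableEquivRealProd_symm_polarCoord_symm_apply]

variable [NormedSpace ℂ E] [CompleteSpace E] {f : ℂ → E}

theorem DifferentiableOn.integral_Ioo_circleMap {c : ℂ} {ρ R : ℝ}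
    (hf : DifferentiableOn ℂ f (ball c R)) (hρ : 0 < ρ) (hρR : ρ < R) :
    ∫ θ in Ioo (-π) π, f (circleMap c ρ θ) = (2 * π) • f c := by
  have hcl : DiffContOnCl ℂ f (ball c |ρ|) := by
    refine DifferentiableOn.diffContOnCl (hf.mono ?_)
    rw [abs_of_pos hρ, closure_ball c hρ.ne']
    exact closedBall_subset_ball hρR
  have hperiod := ((periodic_circleMap c ρ).comp f).intervalIntegral_add_eq (-π) 0
  rw [show -π + 2 * π = π by ring, zero_add] at hperiod
  rw [← integral_Ioc_eq_integral_Ioo, ← intervalIntegral.integral_of_le (by linarith [pi_pos])]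
  calc ∫ θ in -π..π, f (circleMap c ρ θ) = ∫ θ in 0..2 * π, f (circleMap c ρ θ) := hperiod
    _ = (2 * π) • circleAverage f c ρ := by
      rw [circleAverage_def, smul_inv_smul₀ two_pi_pos.ne']
    _ = (2 * π) • f c := by rw [hcl.circleAverage]

theorem DifferentiableOn.integral_ball_eq_smul {R : ℝ} (hR : 0 ≤ R)
    (hf : DifferentiableOn ℂ f (ball 0 R)) (hi : IntegrableOn f (ball 0 R)) :
    ∫ z in ball (0 : ℂ) R, f z = (π * R ^ 2) • f 0 := by
  set g := (ball (0 : ℂ) R).indicator f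
  have hpolar : IntegrableOn (fun p : ℝ × ℝ ↦ p.1 • g (circleMap 0 p.1 p.2))
      (Ioi 0 ×ˢ Ioo (-π) π) := by
    simpa only [polarCoord_symm_eq_circleMap, polarCoord_target] using
      (integrableOn_comp_polarCoord_symm_iff g).2
        ((integrable_indicator_iff measurableSet_ball).2 hi)
  have hradial : ∀ ρ ∈ Ioi (0 : ℝ), ∫ θ in Ioo (-π) π, ρ • g (circleMap 0 ρ θ) =
      (Iio R).indicator (fun ρ ↦ (2 * π * ρ) • f 0) ρ := by
    intro ρ hρ
    rw [integral_smul]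
    by_cases hρR : ρ < R
    · have hg : ∀ θ, g (circleMap 0 ρ θ) = f (circleMap 0 ρ θ) := fun θ ↦
        indicator_of_mem (by simpa [abs_of_pos (show 0 < ρ from hρ)] using hρR) f
      simp only [hg, hf.integral_Ioo_circleMap hρ hρR, indicator_of_mem (show ρ ∈ Iio R from hρR),
        smul_smul, mul_comm ρ]
    · have hg : ∀ θ, g (circleMap 0 ρ θ) = 0 := fun θ ↦
        indicator_of_notMem (by simpa [abs_of_pos (show 0 < ρ from hρ)] using hρR) f
      simp [hg, indicator_of_notMem (show ρ ∉ Iio R from hρR)]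
  calc ∫ z in ball (0 : ℂ) R, f z = ∫ z, g z := (integral_indicator measurableSet_ball).symm
    _ = ∫ p in Ioi 0 ×ˢ Ioo (-π) π, p.1 • g (circleMap 0 p.1 p.2) := by
      simp only [← Complex.integral_comp_polarCoord_symm g, polarCoord_symm_eq_circleMap,
        polarCoord_target]
    _ = ∫ ρ in Ioi 0, (Iio R).indicator (fun ρ ↦ (2 * π * ρ) • f 0) ρ :=
      (setIntegral_prod _ hpolar).trans (setIntegral_congr_fun measurableSet_Ioi hradial)
    _ = ∫ ρ in (0)..R, (2 * π * ρ) • f 0 := by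
      rw [setIntegral_indicator measurableSet_Iio, Ioi_inter_Iio,
        intervalIntegral.integral_of_le hR, integral_Ioc_eq_integral_Ioo]
    _ = (π * R ^ 2) • f 0 := by
      rw [intervalIntegral.integral_smul_const, intervalIntegral.integral_const_mul, integral_id]
      ring_nf

end PolarCoordinates

theorem deriv_mul_deriv_eq_one_of_leftInverse {𝕜 : Type*} [NontriviallyNormedField 𝕜]
    {f g : 𝕜 → 𝕜} {x : 𝕜} (hg : DifferentiableAt 𝕜 g (f x)) (hf : DifferentiableAt 𝕜 f x)
    (hgf : ∀ᶠ y in 𝓝 x, g (f y) = y) :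
    deriv g (f x) * deriv f x = 1 :=
  ((hg.hasDerivAt.comp x hf.hasDerivAt).congr_of_eventuallyEq
    (hgf.mono fun _ h ↦ h.symm)).unique (hasDerivAt_id x)

section HolomorphicChangeOfVariables

variable {E : Type*} [NormedAddCommGroup E] [NormedSpace ℝ E] {U : Set ℂ} {f g : ℂ → ℂ}

theorem Complex.det_restrictScalars_toSpanSingleton (c : ℂ) :
    ((ContinuousLinearMap.toSpanSingleton ℂ c).restrictScalars ℝ).det = normSq c := by
  simp [ContinuousLinearMap.det, LinearMap.det_restrictScalars, Algebra.norm_complex_apply]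

theorem hasFDerivWithinAt_restrictScalars_deriv (hU : IsOpen U)
    (hf : DifferentiableOn ℂ f U) {z : ℂ} (hz : z ∈ U) :
    HasFDerivWithinAt f ((ContinuousLinearMap.toSpanSingleton ℂ (deriv f z)).restrictScalars ℝ)
      U z :=
  ((hf.differentiableAt (hU.mem_nhds hz)).hasDerivAt.hasFDerivAt.restrictScalars
    ℝ).hasFDerivWithinAt

theorem integral_image_eq_integral_normSq_deriv_smul (hU : IsOpen U)
    (hf : DifferentiableOn ℂ f U) (hinj : InjOn f U) (φ : ℂ → E) :
    ∫ w in f '' U, φ w = ∫ z in U, normSq (deriv f z) • φ (f z) := by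
  simp_rw [integral_image_eq_integral_abs_det_fderiv_smul volume hU.measurableSet
    (fun _ hz ↦ hasFDerivWithinAt_restrictScalars_deriv hU hf hz) hinj φ,
    Complex.det_restrictScalars_toSpanSingleton, abs_of_nonneg (normSq_nonneg _)]

theorem integrableOn_image_iff_integrableOn_normSq_deriv_smul (hU : IsOpen U)
    (hf : DifferentiableOn ℂ f U) (hinj : InjOn f U) (φ : ℂ → E) :
    IntegrableOn φ (f '' U) ↔ IntegrableOn (fun z ↦ normSq (deriv f z) • φ (f z)) U := by
  simp_rw [integrableOn_image_iff_integrableOn_abs_det_fderiv_smul volume hU.measurableSet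
    (fun _ hz ↦ hasFDerivWithinAt_restrictScalars_deriv hU hf hz) hinj φ,
    Complex.det_restrictScalars_toSpanSingleton, abs_of_nonneg (normSq_nonneg _)]

theorem integral_normSq_deriv_eq_measureReal_image (hU : IsOpen U)
    (hf : DifferentiableOn ℂ f U) (hinj : InjOn f U) :
    ∫ z in U, normSq (deriv f z) = volume.real (f '' U) := by
  simpa using (integral_image_eq_integral_normSq_deriv_smul hU hf hinj (fun _ ↦ (1 : ℝ))).symm

theorem memLp_two_deriv_of_injOn (hU : IsOpen U) (hf : DifferentiableOn ℂ f U)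
    (hinj : InjOn f U) (hfin : volume (f '' U) ≠ ∞) :
    MemLp (deriv f) 2 (volume.restrict U) := by
  refine (memLp_two_iff_integrable_sq_norm
    ((hf.deriv hU).continuousOn.aestronglyMeasurable hU.measurableSet)).2 ?_
  have h := (integrableOn_image_iff_integrableOn_normSq_deriv_smul hU hf hinj
    (fun _ ↦ (1 : ℝ))).1 (integrableOn_const hfin)
  simpa [← Complex.sq_norm, IntegrableOn] using h

theorem integral_ball_deriv_eq_smul_of_injOn {R : ℝ} (hR : 0 ≤ R)
    (hf : DifferentiableOn ℂ f (ball 0 R)) (hinj : InjOn f (ball 0 R))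
    (hfin : volume (f '' ball 0 R) ≠ ∞) :
    ∫ z in ball (0 : ℂ) R, deriv f z = (π * R ^ 2) • deriv f 0 := by
  have : IsFiniteMeasure (volume.restrict (ball (0 : ℂ) R)) :=
    isFiniteMeasure_restrict.2 measure_ball_lt_top.ne
  exact (hf.deriv isOpen_ball).integral_ball_eq_smul hR
    ((memLp_two_deriv_of_injOn isOpen_ball hf hinj hfin).integrable one_le_two)

theorem deriv_mem_bergmanSpaceC_image (hU : IsOpen U) (hUfin : volume U ≠ ∞)
    (hf : DifferentiableOn ℂ f U) (hinj : InjOn f U) (hfU : IsOpen (f '' U))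
    (hg : DifferentiableOn ℂ g (f '' U)) (hgf : ∀ z ∈ U, deriv g (f z) * deriv f z = 1) :
    deriv g ∈ BergmanSpaceC (f '' U) := by
  refine ⟨hg.deriv hfU, (memLp_two_iff_integrable_sq_norm
    ((hg.deriv hfU).continuousOn.aestronglyMeasurable hfU.measurableSet)).2 ?_⟩
  refine (integrableOn_image_iff_integrableOn_normSq_deriv_smul hU hf hinj _).2 <|
    (integrableOn_const hUfin (C := (1 : ℝ))).congr_fun (fun z hz ↦ ?_) hU.measurableSet
  rw [smul_eq_mul, Complex.sq_norm, ← normSq_mul, mul_comm, hgf z hz, normSq_one]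

theorem integral_image_deriv_eq_integral_conj (hU : IsOpen U) (hf : DifferentiableOn ℂ f U)
    (hinj : InjOn f U) (hgf : ∀ z ∈ U, deriv g (f z) * deriv f z = 1) :
    ∫ w in f '' U, deriv g w = ∫ z in U, conj (deriv f z) := by
  rw [integral_image_eq_integral_normSq_deriv_smul hU hf hinj]
  refine setIntegral_congr_fun hU.measurableSet fun z hz ↦ ?_
  rw [real_smul, ← mul_conj, eq_inv_of_mul_eq_one_left (hgf z hz)]
  have : deriv f z ≠ 0 := right_ne_zero_of_mul_eq_one (hgf z hz)
  field_simp

end HolomorphicChangeOfVariables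

theorem IsBergmanKernelC.apply_eq_integral_mul_conj {Ω : Set ℂ} {K : ℂ → ℂ → ℂ} {z₀ k : ℂ}
    {f : ℂ → ℂ} (hK : IsBergmanKernelC Ω K) (hΩ : MeasurableSet Ω) (hz₀ : z₀ ∈ Ω)
    (hk : ∀ w ∈ Ω, K w z₀ = k) (hf : f ∈ BergmanSpaceC Ω) :
    f z₀ = (∫ w in Ω, f w) * conj k := by
  rw [hK.2.2 f hf z₀ hz₀, ← integral_mul_const]
  refine setIntegral_congr_fun hΩ fun w hw ↦ ?_
  rw [hK.2.1 z₀ hz₀ w hw, hk w hw]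

theorem eqOn_of_integral_eq_of_integral_normSq_eq {X : Type*} [TopologicalSpace X]
    [MeasurableSpace X] {μ : Measure X} [μ.IsOpenPosMeasure]
    {U : Set X} (hU : IsOpen U) (hμU : μ U ≠ ∞) {u : X → ℂ} (hu : ContinuousOn u U)
    (hu2 : MemLp u 2 (μ.restrict U)) {a : ℂ} (hmean : ∫ x in U, u x ∂μ = μ.real U • a)
    (hsq : ∫ x in U, normSq (u x) ∂μ = μ.real U * normSq a) :
    EqOn u (fun _ ↦ a) U := by
  have : IsFiniteMeasure (μ.restrict U) := isFiniteMeasure_restrict.2 hμU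
  have hint : Integrable u (μ.restrict U) := hu2.integrable one_le_two
  have hsqint : Integrable (fun x ↦ normSq (u x)) (μ.restrict U) := by
    simpa [← Complex.sq_norm] using (memLp_two_iff_integrable_sq_norm hu2.1).1 hu2
  have hcrossint : Integrable (fun x ↦ 2 * (u x * conj a).re) (μ.restrict U) :=
    (hint.mul_const (conj a)).re.const_mul 2
  have hcross : ∫ x in U, 2 * (u x * conj a).re ∂μ = 2 * (μ.real U * normSq a) := by
    have h := integral_re (hint.mul_const (conj a))
    simp only [RCLike.re_to_complex] at h
    rw [integral_const_mul, h, integral_mul_const, hmean, real_smul, mul_assoc, mul_conj]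
    norm_cast
  have hsqint' : Integrable (fun x ↦ normSq (u x) + normSq a) (μ.restrict U) :=
    hsqint.add (integrable_const _)
  have hvar : ∫ x in U, normSq (u x - a) ∂μ = 0 := by
    simp_rw [normSq_sub]
    rw [integral_sub hsqint' hcrossint, integral_add hsqint (integrable_const _), hsq, hcross,
      integral_const, measureReal_restrict_apply_univ, smul_eq_mul]
    ring
  have hvarint : Integrable (fun x ↦ normSq (u x - a)) (μ.restrict U) := by
    simp_rw [normSq_sub]
    exact hsqint'.sub hcrossint
  have hae := (integral_eq_zero_iff_of_nonneg (fun x ↦ normSq_nonneg _) hvarint).1 hvar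
  have hzero := Measure.eqOn_open_of_ae_eq hae hU
    (continuous_normSq.comp_continuousOn (hu.sub continuousOn_const)) continuousOn_const
  intro x hx
  simpa [sub_eq_zero] using hzero hx

theorem measureReal_image_eq_pi_mul_normSq_deriv {F G : ℂ → ℂ} {K : ℂ → ℂ → ℂ}
    (hF : DifferentiableOn ℂ F (ball 0 1)) (hinj : InjOn F (ball 0 1))
    (hΩ : IsOpen (F '' ball 0 1)) (hfin : volume (F '' ball 0 1) ≠ ∞)
    (hG : DifferentiableOn ℂ G (F '' ball 0 1))
    (hGF : ∀ z ∈ ball (0 : ℂ) 1, deriv G (F z) * deriv F z = 1)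
    (hK : IsBergmanKernelC (F '' ball 0 1) K)
    (hK0 : ∀ w ∈ F '' ball 0 1, K w (F 0) = ((1 / volume.real (F '' ball 0 1) : ℝ) : ℂ)) :
    volume.real (F '' ball 0 1) = π * normSq (deriv F 0) := by
  have h01 : (0 : ℂ) ∈ ball (0 : ℂ) 1 := mem_ball_self one_pos
  have hrep := hK.apply_eq_integral_mul_conj hΩ.measurableSet (mem_image_of_mem F h01) hK0
    (deriv_mem_bergmanSpaceC_image isOpen_ball measure_ball_lt_top.ne hF hinj hΩ hG hGF)
  rw [integral_image_deriv_eq_integral_conj isOpen_ball hF hinj hGF, integral_conj,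
    integral_ball_deriv_eq_smul_of_injOn zero_le_one hF hinj hfin] at hrep
  have h := hGF 0 h01
  rw [hrep, real_smul, map_mul, conj_ofReal, conj_ofReal] at h
  push_cast at h
  have hv : (volume.real (F '' ball 0 1) : ℂ) ≠ 0 := by rintro hv; simp [hv] at h
  field_simp at h
  apply ofReal_injective
  push_cast
  rw [← mul_conj]
  linear_combination -h

theorem riemann_map_linear_of_minimal_general (Ω : Set ℂ)
    (hΩo : IsOpen Ω) (hΩb : Bornology.IsBounded Ω)
    (F G : ℂ → ℂ) (hF : DifferentiableOn ℂ F (ball (0 : ℂ) 1)) (hG : DifferentiableOn ℂ G Ω)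
    (hF₂ : Set.MapsTo F (ball (0 : ℂ) 1) Ω) (hG₁ : Set.MapsTo G Ω (ball (0 : ℂ) 1))
    (hGF : ∀ z ∈ ball (0 : ℂ) 1, G (F z) = z) (hFG : ∀ w ∈ Ω, F (G w) = w)
    (hF0 : F 0 = 0)
    (K : ℂ → ℂ → ℂ) (hK : IsBergmanKernelC Ω K)
    (hKz0 : ∀ z ∈ Ω, K z 0 = ((1 / (volume Ω).toReal : ℝ) : ℂ)) :
    (∀ z ∈ ball (0 : ℂ) 1, F z = deriv F 0 * z) ∧
    Ω = ball (0 : ℂ) ‖deriv F 0‖ := by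
  set a := deriv F 0
  have h01 : (0 : ℂ) ∈ ball (0 : ℂ) 1 := mem_ball_self one_pos
  have hGF' : ∀ z ∈ ball (0 : ℂ) 1, deriv G (F z) * deriv F z = 1 := fun z hz ↦
    deriv_mul_deriv_eq_one_of_leftInverse (hG.differentiableAt (hΩo.mem_nhds (hF₂ hz)))
      (hF.differentiableAt (isOpen_ball.mem_nhds hz))
      (eventually_of_mem (isOpen_ball.mem_nhds hz) hGF)
  have hinj : InjOn F (ball 0 1) := fun x hx y hy hxy ↦ by rw [← hGF x hx, ← hGF y hy, hxy]
  obtain rfl : F '' ball 0 1 = Ω :=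
    hF₂.image_subset.antisymm fun w hw ↦ ⟨G w, hG₁ hw, hFG w hw⟩
  have hball : volume.real (ball (0 : ℂ) 1) = π := by simp [measureReal_def, Complex.volume_ball]
  have hvol := measureReal_image_eq_pi_mul_normSq_deriv hF hinj hΩo hΩb.measure_lt_top.ne hG hGF'
    hK (by rwa [hF0])
  have hconst : EqOn (deriv F) (fun _ ↦ a) (ball 0 1) := by
    refine eqOn_of_integral_eq_of_integral_normSq_eq isOpen_ball measure_ball_lt_top.ne
      (hF.deriv isOpen_ball).continuousOn
      (memLp_two_deriv_of_injOn isOpen_ball hF hinj hΩb.measure_lt_top.ne) ?_ ?_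
    · simpa [hball] using integral_ball_deriv_eq_smul_of_injOn zero_le_one hF hinj
        hΩb.measure_lt_top.ne
    · rw [integral_normSq_deriv_eq_measureReal_image isOpen_ball hF hinj, hvol, hball]
  have hlin : EqOn F (fun z ↦ a * z) (ball 0 1) :=
    isOpen_ball.eqOn_of_deriv_eq (convex_ball 0 1).isPreconnected hF
      (differentiableOn_id.const_mul a) (fun z hz ↦ by simp [hconst hz]) h01 (by simp [hF0])
  refine ⟨hlin, ?_⟩
  rw [hlin.image_eq, show (fun z ↦ a * z) = (a • ·) from rfl, image_smul,
    _root_.smul_ball (right_ne_zero_of_mul_eq_one (hGF' 0 h01)), smul_zero, mul_one]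

/-- If `Ω ⊆ ℂ` is a bounded domain containing `0`, `F : D(0,1) → Ω` is a biholomorphism
with `F(0) = 0`, and the Bergman kernel of `Ω` satisfies `K(z, 0) = 1/v(Ω)` for all
`z ∈ Ω`, then `F` is linear, and `Ω = D(0, |F'(0)|)`. -/
theorem riemann_map_linear_of_minimal (Ω : Set ℂ)
    (hΩo : IsOpen Ω) (hΩc : IsConnected Ω) (hΩb : Bornology.IsBounded Ω) (h0 : (0 : ℂ) ∈ Ω)
    (F G : ℂ → ℂ) (hF : DifferentiableOn ℂ F (ball (0 : ℂ) 1)) (hG : DifferentiableOn ℂ G Ω)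
    (hF₂ : Set.MapsTo F (ball (0 : ℂ) 1) Ω) (hG₁ : Set.MapsTo G Ω (ball (0 : ℂ) 1))
    (hGF : ∀ z ∈ ball (0 : ℂ) 1, G (F z) = z) (hFG : ∀ w ∈ Ω, F (G w) = w)
    (hF0 : F 0 = 0)
    (K : ℂ → ℂ → ℂ) (hK : IsBergmanKernelC Ω K)
    (hKz0 : ∀ z ∈ Ω, K z 0 = ((1 / (volume Ω).toReal : ℝ) : ℂ)) :
    (∀ z ∈ ball (0 : ℂ) 1, F z = deriv F 0 * z) ∧
    Ω = ball (0 : ℂ) ‖deriv F 0‖ :=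
  riemann_map_linear_of_minimal_general Ω hΩo hΩb F G hF hG hF₂ hG₁ hGF hFG hF0 K hK hKz0
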